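/- arXiv:2102.10297 — 2 statements merged into one kernel-verified Lean document; each statement's English description precedes it below -/
import Mathlib

section
/- Let α(t) be a complex d×d matrix-valued solution of the Riccati equation α' = -2α² - (1/2)∇∇V(q(t)) with imaginary part α_I positive definite, and let γ(t) be a complex scalar solving γ' = (1/2)p^T p - V(q) + iε tr(α_R), where α_R, α_I are the real and imaginary parts of α. If the initial data satisfy exp(-γ_I(0)/ε) = (det α_I(0))^{1/4}, then for all t ≥ 0 one has exp(-γ_I(t)/ε) = (det α_I(t))^{1/4}. -/
open MeasureTheory Matrix


noncomputable def detCML (d : ℕ) : ContinuousMultilinearMap ℝ (fun _ : Fin d => (Fin d → ℝ)) ℝ :=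
  MultilinearMap.mkContinuous
    (Matrix.detRowAlternating (R := ℝ) (n := Fin d)).toMultilinearMap
    (Nat.factorial d) (by
      intro m
      have h1 : Matrix.detRowAlternating (R := ℝ) (n := Fin d) m = (Matrix.of m).det := rfl
      rw [AlternatingMap.coe_multilinearMap, h1, Matrix.det_apply']
      calc ‖∑ σ : Equiv.Perm (Fin d), Equiv.Perm.sign σ * ∏ i, Matrix.of m (σ i) i‖
          ≤ ∑ σ : Equiv.Perm (Fin d), ‖(Equiv.Perm.sign σ : ℝ) * ∏ i, Matrix.of m (σ i) i‖ :=
            norm_sum_le _ _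
        _ ≤ ∑ σ : Equiv.Perm (Fin d), ∏ i, ‖m i‖ := by
            refine Finset.sum_le_sum fun σ _ => ?_
            rw [norm_mul]
            have hs : ‖((Equiv.Perm.sign σ : ℤ) : ℝ)‖ = 1 := by
              rcases Int.units_eq_one_or (Equiv.Perm.sign σ) with h | h <;> simp [h]
            rw [hs, one_mul]
            calc ‖∏ i, Matrix.of m (σ i) i‖ ≤ ∏ i, ‖m (σ i) i‖ := by
                  rw [Real.norm_eq_abs, Finset.abs_prod]
                  exact le_of_eq rfl
              _ ≤ ∏ i, ‖m (σ i)‖ := Finset.prod_le_prod (fun _ _ => abs_nonneg _)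
                  (fun i _ => norm_le_pi_norm (m (σ i)) i)
              _ = ∏ i, ‖m i‖ := Equiv.prod_comp σ (fun i => ‖m i‖)
        _ = (Nat.factorial d) * ∏ i, ‖m i‖ := by
            rw [Finset.sum_const, Finset.card_univ, Fintype.card_perm, Fintype.card_fin,
              nsmul_eq_mul]
      )

theorem sum_det_updateRow {d : ℕ} (A B : Matrix (Fin d) (Fin d) ℝ) :
    ∑ i, (A.updateRow i (B i)).det = (Matrix.adjugate A * B).trace := by
  have hadj : ∀ j i : Fin d, Matrix.cramer Aᵀ (Pi.single j 1) i = Matrix.adjugate A j i := by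
    intro j i; rw [Matrix.adjugate_def]; rfl
  have h : ∀ i, (A.updateRow i (B i)).det = ∑ j, B i j * Matrix.adjugate A j i := by
    intro i
    rw [← Matrix.cramer_transpose_apply]
    have hB : B i = ∑ j, B i j • (Pi.single j 1 : Fin d → ℝ) := by
      ext j'; simp [Pi.single_apply, eq_comm]
    conv_lhs => rw [hB, map_sum]
    simp only [_root_.map_smul, Finset.sum_apply, Pi.smul_apply, smul_eq_mul]
    exact Finset.sum_congr rfl fun j _ => by rw [hadj]
  simp only [h, Matrix.trace, Matrix.diag, Matrix.mul_apply]
  rw [Finset.sum_comm]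
  exact Finset.sum_congr rfl fun j _ => Finset.sum_congr rfl fun i _ => mul_comm _ _

theorem hasDerivAt_det {d : ℕ} {M : ℝ → Matrix (Fin d) (Fin d) ℝ}
    {M' : Matrix (Fin d) (Fin d) ℝ} {x : ℝ}
    (h : ∀ i j, HasDerivAt (fun t => M t i j) (M' i j) x) :
    HasDerivAt (fun t => (M t).det) ((Matrix.adjugate (M x) * M').trace) x := by
  have hM : HasDerivAt (fun t i j => M t i j) (fun i j => M' i j) x :=
    hasDerivAt_pi.2 fun i => hasDerivAt_pi.2 fun j => h i j
  have h1 : HasDerivAt (fun t => detCML d (M t)) ((detCML d).linearDeriv (M x) M') x :=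
    ((detCML d).hasFDerivAt (M x)).comp_hasDerivAt x hM
  have h2 : (fun t => detCML d (M t)) = fun t => (M t).det := rfl
  have h3 : (detCML d).linearDeriv (M x) M' = (Matrix.adjugate (M x) * M').trace := by
    erw [ContinuousMultilinearMap.linearDeriv_apply, ← sum_det_updateRow]
    rfl
  rw [h2, h3] at h1
  exact h1

/-- The Hessian matrix of `V` at `x`. -/
noncomputable def hessianMat {d : ℕ} (V : (Fin d → ℝ) → ℝ) (x : Fin d → ℝ) :
    Matrix (Fin d) (Fin d) ℝ :=
  Matrix.of fun i j => fderiv ℝ (fun y => fderiv ℝ V y (Pi.single j 1)) x (Pi.single i 1)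

/-- conservation of the normalization identity
`exp(-γ_I/ε) = (det α_I)^{1/4}` along the GWPT parameter flow. -/
theorem gwpt_normalization_identity {d : ℕ} (ε : ℝ) (hε : 0 < ε)
    (V : (Fin d → ℝ) → ℝ) (hV : ContDiff ℝ (⊤ : ℕ∞) V)
    (q p : ℝ → Fin d → ℝ)
    (α : ℝ → Matrix (Fin d) (Fin d) ℂ) (γ : ℝ → ℂ)
    (hq : ∀ t i, HasDerivAt (fun s => q s i) (p t i) t)
    (hp : ∀ t i, HasDerivAt (fun s => p s i) (-(fderiv ℝ V (q t) (Pi.single i 1))) t)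
    (hα : ∀ t i j, HasDerivAt (fun s => α s i j)
        (-2 * (∑ k, α t i k * α t k j) - (1/2) * ((hessianMat V (q t) i j : ℝ) : ℂ)) t)
    (hαI : ∀ t, (Matrix.of fun i j => (α t i j).im).PosDef)
    (hγ : ∀ t, HasDerivAt γ
        ((((1:ℝ)/2 * ∑ i, (p t i)^2 - V (q t) : ℝ) : ℂ)
          + Complex.I * (ε : ℂ) * ((∑ i, (α t i i).re : ℝ) : ℂ)) t)
    (hinit : Real.exp (-(γ 0).im / ε) =
      ((Matrix.of fun i j => (α 0 i j).im).det) ^ ((1:ℝ)/4)) :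
    ∀ t ≥ (0:ℝ), Real.exp (-(γ t).im / ε) =
      ((Matrix.of fun i j => (α t i j).im).det) ^ ((1:ℝ)/4) := by
  set αI : ℝ → Matrix (Fin d) (Fin d) ℝ := fun t => Matrix.of fun i j => (α t i j).im with hαIdef
  set αR : ℝ → Matrix (Fin d) (Fin d) ℝ := fun t => Matrix.of fun i j => (α t i j).re with hαRdef
  set trR : ℝ → ℝ := fun t => ∑ i, (α t i i).re with htrRdef
  -- derivative of imaginary parts of entries
  have h_im : ∀ t i j, HasDerivAt (fun s => αI s i j)
      (((-2:ℝ) • (αR t * αI t + αI t * αR t)) i j) t := by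
    intro t i j
    have h1 := Complex.imCLM.hasFDerivAt.comp_hasDerivAt t (hα t i j)
    have h2 : Complex.imCLM (-2 * (∑ k, α t i k * α t k j)
        - (1/2) * ((hessianMat V (q t) i j : ℝ) : ℂ))
        = ((-2:ℝ) • (αR t * αI t + αI t * αR t)) i j := by
      simp only [Complex.imCLM_apply, Complex.sub_im, Complex.mul_im, Complex.im_sum,
        Complex.ofReal_im, Complex.ofReal_re, Matrix.smul_apply, Matrix.add_apply,
        Matrix.mul_apply, hαRdef, hαIdef, Matrix.of_apply, smul_eq_mul]
      push_cast
      simp only [Complex.re_sum, Complex.im_sum, Complex.mul_im, Complex.mul_re]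
      rw [Finset.mul_sum, ← Finset.sum_add_distrib, Finset.mul_sum]
      ring_nf
      norm_num [Finset.mul_sum]
      ring_nf
      rw [Finset.sum_mul, ← Finset.sum_neg_distrib]
      exact Finset.sum_congr rfl fun k _ => by ring
    rw [← h2]
    exact h1
  -- derivative of det αI
  have h_det : ∀ t, HasDerivAt (fun s => (αI s).det) (-4 * trR t * (αI t).det) t := by
    intro t
    have h1 := hasDerivAt_det (h := h_im t)
    have h2 : (Matrix.adjugate (αI t) * ((-2:ℝ) • (αR t * αI t + αI t * αR t))).trace
        = -4 * trR t * (αI t).det := by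
      have htr : (αR t).trace = trR t := by
        simp [Matrix.trace, Matrix.diag, hαRdef, htrRdef]
      rw [Matrix.mul_smul, Matrix.trace_smul, Matrix.mul_add, Matrix.trace_add]
      have e1 : (Matrix.adjugate (αI t) * (αR t * αI t)).trace = (αI t).det * trR t := by
        rw [Matrix.trace_mul_comm, Matrix.mul_assoc, Matrix.mul_adjugate, Matrix.mul_smul,
          Matrix.mul_one, Matrix.trace_smul, htr, smul_eq_mul]
      have e2 : (Matrix.adjugate (αI t) * (αI t * αR t)).trace = (αI t).det * trR t := by
        rw [← Matrix.mul_assoc, Matrix.adjugate_mul, Matrix.smul_mul, Matrix.one_mul,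
          Matrix.trace_smul, htr, smul_eq_mul]
      rw [e1, e2, smul_eq_mul]
      ring
    rw [h2] at h1
    exact h1
  -- derivative of γ_I
  have h_gim : ∀ t, HasDerivAt (fun s => (γ s).im) (ε * trR t) t := by
    intro t
    have h1 := Complex.imCLM.hasFDerivAt.comp_hasDerivAt t (hγ t)
    have h2 : Complex.imCLM ((((1:ℝ)/2 * ∑ i, (p t i)^2 - V (q t) : ℝ) : ℂ)
        + Complex.I * (ε : ℂ) * ((∑ i, (α t i i).re : ℝ) : ℂ)) = ε * trR t := by
      simp [Complex.add_im, Complex.mul_im, htrRdef, ← Complex.ofReal_pow]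
    rw [← h2]
    exact h1
  -- the conserved quantity
  set F : ℝ → ℝ := fun t => Real.exp (4 * (γ t).im / ε) * (αI t).det with hFdef
  have hF : ∀ t, HasDerivAt F 0 t := by
    intro t
    have hexp : HasDerivAt (fun s => Real.exp (4 * (γ s).im / ε))
        (Real.exp (4 * (γ t).im / ε) * (4 * (ε * trR t) / ε)) t :=
      (((h_gim t).const_mul (4:ℝ)).div_const ε).exp
    have := hexp.mul (h_det t)
    have hz : Real.exp (4 * (γ t).im / ε) * (4 * (ε * trR t) / ε) * (αI t).det
        + Real.exp (4 * (γ t).im / ε) * (-4 * trR t * (αI t).det) = 0 := by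
      field_simp
      ring
    rw [hz] at this
    exact this
  have hdetpos : ∀ t, 0 < (αI t).det := fun t => (hαI t).det_pos
  have hFconst : ∀ t, F t = F 0 := fun t =>
    is_const_of_deriv_eq_zero (fun x => (hF x).differentiableAt) (fun x => (hF x).deriv) t 0
  have hF0 : F 0 = 1 := by
    have h4 : ((αI 0).det ^ ((1:ℝ)/4)) ^ (4:ℕ) = (αI 0).det := by
      rw [← Real.rpow_natCast ((αI 0).det ^ ((1:ℝ)/4)) 4,
        ← Real.rpow_mul (hdetpos 0).le]
      norm_num
    rw [hFdef]
    simp only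
    rw [← h4, ← hinit, ← Real.exp_nat_mul]
    rw [← Real.exp_add]
    rw [show (4:ℝ) * (γ 0).im / ε + (4:ℕ) * (-(γ 0).im / ε) = 0 by push_cast; field_simp; ring]
    exact Real.exp_zero
  intro t _
  have hFt : Real.exp (4 * (γ t).im / ε) * (αI t).det = 1 := (hFconst t).trans hF0
  have hdet_eq : (αI t).det = Real.exp (-(4 * (γ t).im / ε)) := by
    rw [Real.exp_neg]
    field_simp at hFt ⊢
    linarith [hFt]
  rw [hdet_eq, Real.rpow_def_of_pos (Real.exp_pos _), Real.log_exp]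
  congr 1
  ring
end

section
/- Let ω(x) = exp(-|Q|⁻²x²) with |Q|² = 1/2 (so ω(x) = e^{-2x²}). Then for every u ∈ H¹(R, ω dx): ‖x u‖²_{L²_ω} ≤ (1/3)(‖u‖²_{L²_ω} + ‖u'‖²_{L²_ω}). -/
set_option maxHeartbeats 1000000

open MeasureTheory Set
open scoped ENNReal

lemma wx_key_interval (v : ℝ → ℝ) (hv : Differentiable ℝ v) (n : ℝ) (hn : 0 ≤ n)
    (hB : IntegrableOn (fun x => (deriv v x)^2 * Real.exp (-2*x^2)) (Set.Ioc (-n) n)) :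
    ∫ x in Set.Ioc (-n) n, x^2 * (v x)^2 * Real.exp (-2*x^2)
      ≤ (1/3) * ((∫ x in Set.Ioc (-n) n, (v x)^2 * Real.exp (-2*x^2))
        + ∫ x in Set.Ioc (-n) n, (deriv v x)^2 * Real.exp (-2*x^2)) := by
  have hle : -n ≤ n := by linarith
  have hvc : Continuous v := hv.continuous
  have hdm : Measurable (deriv v) := measurable_deriv v
  have hωc : Continuous (fun x : ℝ => Real.exp (-2*x^2)) := by continuity
  -- Integrability facts on Ioc (-n) n
  have hI1 : IntegrableOn (fun x => x^2 * (v x)^2 * Real.exp (-2*x^2)) (Set.Ioc (-n) n) := by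
    apply Continuous.integrableOn_Ioc; continuity
  have hI2 : IntegrableOn (fun x => (v x)^2 * Real.exp (-2*x^2)) (Set.Ioc (-n) n) := by
    apply Continuous.integrableOn_Ioc; continuity
  have hmeas_cross : Measurable (fun x => 2*x*(v x)*(deriv v x) * Real.exp (-2*x^2)) := by
    apply Measurable.mul _ hωc.measurable
    exact (((measurable_const.mul measurable_id).mul hvc.measurable).mul hdm)
  have hcrossbd : ∀ x, |2*x*(v x)*(deriv v x)| ≤ x^2*(v x)^2 + (deriv v x)^2 := by
    intro x
    rw [abs_le]
    constructor <;> nlinarith [sq_nonneg (x * v x - deriv v x), sq_nonneg (x * v x + deriv v x)]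
  have hIcross : IntegrableOn (fun x => 2*x*(v x)*(deriv v x) * Real.exp (-2*x^2)) (Set.Ioc (-n) n) := by
    apply Integrable.mono' (hI1.add hB) hmeas_cross.aestronglyMeasurable
    filter_upwards with x
    have h1 := hcrossbd x
    have h2 := Real.exp_pos (-2*x^2)
    rw [Real.norm_eq_abs, abs_mul, abs_of_pos h2]
    simp only [Pi.add_apply]
    nlinarith [abs_nonneg (2*x*(v x)*(deriv v x))]
  -- deriv v squared integrable without weight on Ioc
  have hIv'2 : IntegrableOn (fun x => (deriv v x)^2) (Set.Ioc (-n) n) := by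
    apply Integrable.mono' (hB.const_mul (Real.exp (2*n^2)))
      ((hdm.pow_const 2).aestronglyMeasurable.restrict)
    rw [ae_restrict_iff' measurableSet_Ioc]
    filter_upwards with x hx
    have hx2 : x^2 ≤ n^2 := by
      rcases hx with ⟨h1, h2⟩
      nlinarith
    have : Real.exp (2*n^2) * Real.exp (-2*x^2) ≥ 1 := by
      rw [← Real.exp_add]
      have : (0:ℝ) ≤ 2*n^2 + -2*x^2 := by linarith
      calc (1:ℝ) = Real.exp 0 := (Real.exp_zero).symm
        _ ≤ Real.exp (2*n^2 + -2*x^2) := Real.exp_le_exp.mpr this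
    rw [Real.norm_eq_abs, abs_of_nonneg (sq_nonneg _)]
    nlinarith [sq_nonneg (deriv v x), Real.exp_pos (-2*x^2)]
  -- integration by parts
  have hIBP := intervalIntegral.integral_mul_deriv_eq_deriv_mul (a := -n) (b := n)
    (u := fun x => x * v x ^ 2) (v := fun x => -(1/4) * Real.exp (-2*x^2))
    (u' := fun x => v x ^ 2 + 2*x*(v x)*(deriv v x)) (v' := fun x => x * Real.exp (-2*x^2))
    (fun x _ => by
      have h1 : HasDerivAt (fun x : ℝ => x * v x ^ 2)
          (1 * v x ^ 2 + x * (2 * v x ^ 1 * deriv v x)) x :=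
        (hasDerivAt_id x).mul ((hv x).hasDerivAt.pow 2)
      exact h1.congr_deriv (by ring))
    (fun x _ => by
      have h1 : HasDerivAt (fun x : ℝ => -2*x^2) (-2*(2*x^1)) x :=
        ((hasDerivAt_pow 2 x).const_mul (-2))
      have h2 := (h1.exp).const_mul (-(1/4 : ℝ))
      convert h2 using 1; ring)
    (by
      rw [intervalIntegrable_iff_integrableOn_Ioc_of_le hle]
      apply Integrable.add (by apply Continuous.integrableOn_Ioc; continuity)
      have hI1' : IntegrableOn (fun x => x^2 * (v x)^2) (Set.Ioc (-n) n) := by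
        apply Continuous.integrableOn_Ioc; continuity
      apply Integrable.mono' (hI1'.add hIv'2)
        ((((measurable_const.mul measurable_id).mul hvc.measurable).mul hdm).aestronglyMeasurable)
      filter_upwards with x
      have h1 := hcrossbd x
      rw [Real.norm_eq_abs]
      simpa using h1)
    (by apply Continuous.intervalIntegrable; continuity)
  -- convert interval integrals to set integrals
  rw [intervalIntegral.integral_of_le hle, intervalIntegral.integral_of_le hle] at hIBP
  have hconv1 : ∫ x in Set.Ioc (-n) n, (x * v x ^ 2) * (x * Real.exp (-2*x^2))
      = ∫ x in Set.Ioc (-n) n, x^2 * (v x)^2 * Real.exp (-2*x^2) := by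
    apply setIntegral_congr_fun measurableSet_Ioc
    intro x _; ring
  have hconv2 : ∫ x in Set.Ioc (-n) n, (v x ^ 2 + 2*x*(v x)*(deriv v x)) * (-(1/4) * Real.exp (-2*x^2))
      = -(1/4) * ((∫ x in Set.Ioc (-n) n, (v x)^2 * Real.exp (-2*x^2))
          + ∫ x in Set.Ioc (-n) n, 2*x*(v x)*(deriv v x) * Real.exp (-2*x^2)) := by
    rw [← integral_add hI2 hIcross, ← integral_const_mul]
    apply setIntegral_congr_fun measurableSet_Ioc
    intro x _; ring
  rw [hconv1, hconv2] at hIBP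
  set I := ∫ x in Set.Ioc (-n) n, x^2 * (v x)^2 * Real.exp (-2*x^2) with hI
  set A := ∫ x in Set.Ioc (-n) n, (v x)^2 * Real.exp (-2*x^2) with hA
  set B := ∫ x in Set.Ioc (-n) n, (deriv v x)^2 * Real.exp (-2*x^2) with hBdef
  set C := ∫ x in Set.Ioc (-n) n, 2*x*(v x)*(deriv v x) * Real.exp (-2*x^2) with hC
  have hbdry : (fun x => x * v x ^ 2) n * (fun x => -(1/4) * Real.exp (-2*x^2)) n -
      (fun x => x * v x ^ 2) (-n) * (fun x => -(1/4) * Real.exp (-2*x^2)) (-n) ≤ 0 := by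
    simp only
    have h1 := (Real.exp_pos (-2*n^2)).le
    have h2 := (Real.exp_pos (-2*(-n)^2)).le
    have h3 : 0 ≤ n * v n ^ 2 * Real.exp (-2*n^2) :=
      mul_nonneg (mul_nonneg hn (sq_nonneg _)) h1
    have h4 : 0 ≤ n * v (-n) ^ 2 * Real.exp (-2*(-n)^2) :=
      mul_nonneg (mul_nonneg hn (sq_nonneg _)) h2
    nlinarith [h3, h4]
  have hCle : C ≤ I + B := by
    rw [hC, hI, hBdef, ← integral_add hI1 hB]
    apply setIntegral_mono_on hIcross (hI1.add hB) measurableSet_Ioc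
    intro x _
    simp only [Pi.add_apply]
    have := Real.exp_pos (-2*x^2)
    nlinarith [sq_nonneg (x * v x - deriv v x)]
  have hIval : I ≤ (1/4) * (A + C) := by
    rw [hIBP]; nlinarith [hbdry]
  linarith

lemma wx_lintegral_le (f : ℝ → ℝ≥0∞) (hf : Measurable f) (C : ℝ≥0∞)
    (h : ∀ m : ℕ, ∫⁻ x in Set.Ioc (-(m:ℝ)) m, f x ≤ C) : ∫⁻ x, f x ≤ C := by
  have heq : ∫⁻ x, f x = ⨆ m : ℕ, ∫⁻ x in Set.Ioc (-(m:ℝ)) m, f x := by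
    have h1 : ∀ m : ℕ, ∫⁻ x in Set.Ioc (-(m:ℝ)) m, f x
        = ∫⁻ x, (Set.Ioc (-(m:ℝ)) m).indicator f x := by
      intro m; rw [lintegral_indicator measurableSet_Ioc]
    simp_rw [h1]
    rw [← lintegral_iSup (fun m => hf.indicator measurableSet_Ioc)]
    · congr 1; funext x
      apply le_antisymm
      · obtain ⟨m, hm⟩ := exists_nat_gt |x|
        have hx : x ∈ Set.Ioc (-(m:ℝ)) m := by
          constructor
          · have := abs_lt.mp hm; linarith [this.1]
          · have := abs_lt.mp hm; linarith [this.2]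
        exact le_iSup_of_le (f := fun m : ℕ => (Set.Ioc (-(m:ℝ)) m).indicator f x) m
          (le_of_eq (Set.indicator_of_mem hx f).symm)
      · apply iSup_le; intro m
        exact Set.indicator_le_self _ _ x
    · intro a b hab x
      dsimp only
      by_cases hx : x ∈ Set.Ioc (-(a:ℝ)) a
      · have hx' : x ∈ Set.Ioc (-(b:ℝ)) b :=
          Set.Ioc_subset_Ioc (neg_le_neg (Nat.cast_le.mpr hab)) (Nat.cast_le.mpr hab) hx
        rw [Set.indicator_of_mem hx, Set.indicator_of_mem hx']
      · rw [Set.indicator_of_notMem hx]; exact zero_le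
  rw [heq]
  exact iSup_le h

lemma wx_comp (v : ℝ → ℝ) (hv : Differentiable ℝ v)
    (hB : ∫⁻ x, ENNReal.ofReal ((deriv v x)^2 * Real.exp (-2*x^2)) ≠ ⊤) :
    ∫⁻ x, ENNReal.ofReal (x^2 * (v x)^2 * Real.exp (-2*x^2))
      ≤ (1/3) * ((∫⁻ x, ENNReal.ofReal ((v x)^2 * Real.exp (-2*x^2)))
        + ∫⁻ x, ENNReal.ofReal ((deriv v x)^2 * Real.exp (-2*x^2))) := by
  have hdm : Measurable (deriv v) := measurable_deriv v
  have hvc : Continuous v := hv.continuous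
  have hgmeas : Measurable (fun x => (deriv v x)^2 * Real.exp (-2*x^2)) :=
    (hdm.pow_const 2).mul (Continuous.measurable (by continuity))
  have hgnn : ∀ x, 0 ≤ (deriv v x)^2 * Real.exp (-2*x^2) :=
    fun x => mul_nonneg (sq_nonneg _) (Real.exp_pos _).le
  have hgint : Integrable (fun x => (deriv v x)^2 * Real.exp (-2*x^2)) := by
    refine ⟨hgmeas.aestronglyMeasurable, ?_⟩
    rw [hasFiniteIntegral_iff_ofReal (Filter.Eventually.of_forall hgnn)]
    exact lt_top_iff_ne_top.mpr hB
  have hfmeas : Measurable (fun x => ENNReal.ofReal (x^2 * (v x)^2 * Real.exp (-2*x^2))) := by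
    exact ENNReal.measurable_ofReal.comp (Continuous.measurable (by continuity))
  apply wx_lintegral_le _ hfmeas
  intro m
  have hm : (0:ℝ) ≤ m := Nat.cast_nonneg m
  have key := wx_key_interval v hv m hm hgint.integrableOn
  have hInn : ∀ x : ℝ, 0 ≤ x^2 * (v x)^2 * Real.exp (-2*x^2) :=
    fun x => mul_nonneg (mul_nonneg (sq_nonneg _) (sq_nonneg _)) (Real.exp_pos _).le
  have hAnn : ∀ x : ℝ, 0 ≤ (v x)^2 * Real.exp (-2*x^2) :=
    fun x => mul_nonneg (sq_nonneg _) (Real.exp_pos _).le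
  have hIint : IntegrableOn (fun x => x^2 * (v x)^2 * Real.exp (-2*x^2)) (Set.Ioc (-(m:ℝ)) m) := by
    apply Continuous.integrableOn_Ioc; continuity
  have hAint : IntegrableOn (fun x => (v x)^2 * Real.exp (-2*x^2)) (Set.Ioc (-(m:ℝ)) m) := by
    apply Continuous.integrableOn_Ioc; continuity
  rw [← ofReal_integral_eq_lintegral_ofReal hIint (Filter.Eventually.of_forall fun x => hInn x)]
  calc ENNReal.ofReal (∫ x in Set.Ioc (-(m:ℝ)) m, x^2 * (v x)^2 * Real.exp (-2*x^2))
      ≤ ENNReal.ofReal ((1/3) * ((∫ x in Set.Ioc (-(m:ℝ)) m, (v x)^2 * Real.exp (-2*x^2))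
          + ∫ x in Set.Ioc (-(m:ℝ)) m, (deriv v x)^2 * Real.exp (-2*x^2))) :=
        ENNReal.ofReal_le_ofReal key
    _ = ENNReal.ofReal (1/3) * (ENNReal.ofReal (∫ x in Set.Ioc (-(m:ℝ)) m, (v x)^2 * Real.exp (-2*x^2))
          + ENNReal.ofReal (∫ x in Set.Ioc (-(m:ℝ)) m, (deriv v x)^2 * Real.exp (-2*x^2))) := by
        rw [ENNReal.ofReal_mul (by norm_num), ENNReal.ofReal_add
          (setIntegral_nonneg measurableSet_Ioc (fun x _ => hAnn x))
          (setIntegral_nonneg measurableSet_Ioc (fun x _ => hgnn x))]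
    _ = (1/3) * ((∫⁻ x in Set.Ioc (-(m:ℝ)) m, ENNReal.ofReal ((v x)^2 * Real.exp (-2*x^2)))
          + ∫⁻ x in Set.Ioc (-(m:ℝ)) m, ENNReal.ofReal ((deriv v x)^2 * Real.exp (-2*x^2))) := by
        rw [ofReal_integral_eq_lintegral_ofReal hAint (Filter.Eventually.of_forall fun x => hAnn x),
          ofReal_integral_eq_lintegral_ofReal hgint.integrableOn
            (Filter.Eventually.of_forall fun x => hgnn x)]
        congr 1
        rw [ENNReal.ofReal_div_of_pos (by norm_num)]
        norm_num
    _ ≤ (1/3) * ((∫⁻ x, ENNReal.ofReal ((v x)^2 * Real.exp (-2*x^2)))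
          + ∫⁻ x, ENNReal.ofReal ((deriv v x)^2 * Real.exp (-2*x^2))) := by
        apply mul_le_mul_right
        exact add_le_add (setLIntegral_le_lintegral _ _) (setLIntegral_le_lintegral _ _)

/-- with the Gaussian weight `ω(x) = e^{-2x²}` (i.e. `|Q|² = 1/2`),
`‖xu‖²_ω ≤ (1/3)(‖u‖²_ω + ‖u'‖²_ω)` for every `u ∈ H¹(ℝ, ω dx)`. -/
theorem weighted_x_multiplication_estimate (u : ℝ → ℂ) (hu : Differentiable ℝ u) :
    (∫⁻ x : ℝ, ENNReal.ofReal (x^2 * ‖u x‖^2 * Real.exp (-2*x^2)))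
      ≤ (1/3) * ((∫⁻ x : ℝ, ENNReal.ofReal (‖u x‖^2 * Real.exp (-2*x^2)))
          + ∫⁻ x : ℝ, ENNReal.ofReal (‖deriv u x‖^2 * Real.exp (-2*x^2))) := by
  by_cases hB : (∫⁻ x : ℝ, ENNReal.ofReal (‖deriv u x‖^2 * Real.exp (-2*x^2))) = ⊤
  · rw [hB]
    have : (∫⁻ x : ℝ, ENNReal.ofReal (‖u x‖^2 * Real.exp (-2*x^2))) + ⊤ = ⊤ := add_top _
    rw [this, ENNReal.mul_top (by norm_num)]
    exact le_top
  · set a : ℝ → ℝ := fun x => (u x).re with ha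
    set b : ℝ → ℝ := fun x => (u x).im with hb
    have hda : ∀ x, HasDerivAt a ((deriv u x).re) x := fun x =>
      (Complex.reCLM.hasFDerivAt.comp_hasDerivAt x (hu x).hasDerivAt)
    have hdb : ∀ x, HasDerivAt b ((deriv u x).im) x := fun x =>
      (Complex.imCLM.hasFDerivAt.comp_hasDerivAt x (hu x).hasDerivAt)
    have hdiffa : Differentiable ℝ a := fun x => (hda x).differentiableAt
    have hdiffb : Differentiable ℝ b := fun x => (hdb x).differentiableAt
    have hderiva : deriv a = fun x => (deriv u x).re := funext fun x => (hda x).deriv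
    have hderivb : deriv b = fun x => (deriv u x).im := funext fun x => (hdb x).deriv
    have hnorm : ∀ z : ℂ, ‖z‖^2 = z.re^2 + z.im^2 := fun z => by
      rw [Complex.sq_norm, Complex.normSq_apply]; ring
    have hud : Measurable (deriv u) := measurable_deriv u
    have hac : Continuous a := Complex.continuous_re.comp hu.continuous
    have hbc : Continuous b := Complex.continuous_im.comp hu.continuous
    have hωc : Continuous (fun x : ℝ => Real.exp (-2*x^2)) := by continuity
    have hnn : ∀ (c : ℝ → ℝ) (x : ℝ), 0 ≤ (c x)^2 * Real.exp (-2*x^2) := fun c x =>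
      mul_nonneg (sq_nonneg _) (Real.exp_pos _).le
    have hnn2 : ∀ (c : ℝ → ℝ) (x : ℝ), 0 ≤ x^2 * (c x)^2 * Real.exp (-2*x^2) := fun c x =>
      mul_nonneg (mul_nonneg (sq_nonneg _) (sq_nonneg _)) (Real.exp_pos _).le
    -- splitting the three lintegrals
    have eI : (∫⁻ x : ℝ, ENNReal.ofReal (x^2 * ‖u x‖^2 * Real.exp (-2*x^2)))
        = (∫⁻ x : ℝ, ENNReal.ofReal (x^2 * (a x)^2 * Real.exp (-2*x^2)))
          + ∫⁻ x : ℝ, ENNReal.ofReal (x^2 * (b x)^2 * Real.exp (-2*x^2)) := by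
      rw [← lintegral_add_left (f := fun x => ENNReal.ofReal (x^2 * (a x)^2 * Real.exp (-2*x^2)))
        ((((continuous_pow 2).mul (hac.pow 2)).mul hωc).measurable.ennreal_ofReal)]
      apply lintegral_congr
      intro x
      rw [← ENNReal.ofReal_add (hnn2 a x) (hnn2 b x)]
      congr 1
      rw [hnorm (u x)]; ring
    have eA : (∫⁻ x : ℝ, ENNReal.ofReal (‖u x‖^2 * Real.exp (-2*x^2)))
        = (∫⁻ x : ℝ, ENNReal.ofReal ((a x)^2 * Real.exp (-2*x^2)))
          + ∫⁻ x : ℝ, ENNReal.ofReal ((b x)^2 * Real.exp (-2*x^2)) := by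
      rw [← lintegral_add_left (f := fun x => ENNReal.ofReal ((a x)^2 * Real.exp (-2*x^2))) ((((hac.pow 2)).mul hωc).measurable.ennreal_ofReal)]
      apply lintegral_congr
      intro x
      rw [← ENNReal.ofReal_add (hnn a x) (hnn b x)]
      congr 1
      rw [hnorm (u x)]; ring
    have eB : (∫⁻ x : ℝ, ENNReal.ofReal (‖deriv u x‖^2 * Real.exp (-2*x^2)))
        = (∫⁻ x : ℝ, ENNReal.ofReal ((deriv a x)^2 * Real.exp (-2*x^2)))
          + ∫⁻ x : ℝ, ENNReal.ofReal ((deriv b x)^2 * Real.exp (-2*x^2)) := by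
      rw [← lintegral_add_left (f := fun x => ENNReal.ofReal ((deriv a x)^2 * Real.exp (-2*x^2)))
        ((((measurable_deriv a).pow_const 2).mul hωc.measurable).ennreal_ofReal)]
      apply lintegral_congr
      intro x
      rw [← ENNReal.ofReal_add (mul_nonneg (sq_nonneg _) (Real.exp_pos _).le)
        (mul_nonneg (sq_nonneg _) (Real.exp_pos _).le)]
      congr 1
      rw [hnorm (deriv u x), (hda x).deriv, (hdb x).deriv]; ring
    have hBa : (∫⁻ x : ℝ, ENNReal.ofReal ((deriv a x)^2 * Real.exp (-2*x^2))) ≠ ⊤ := by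
      intro h; apply hB; rw [eB, h, top_add]
    have hBb : (∫⁻ x : ℝ, ENNReal.ofReal ((deriv b x)^2 * Real.exp (-2*x^2))) ≠ ⊤ := by
      intro h; apply hB; rw [eB, h, add_top]
    have ka := wx_comp a hdiffa hBa
    have kb := wx_comp b hdiffb hBb
    rw [eI, eA, eB]
    calc (∫⁻ x : ℝ, ENNReal.ofReal (x^2 * (a x)^2 * Real.exp (-2*x^2)))
          + ∫⁻ x : ℝ, ENNReal.ofReal (x^2 * (b x)^2 * Real.exp (-2*x^2))
        ≤ (1/3) * ((∫⁻ x : ℝ, ENNReal.ofReal ((a x)^2 * Real.exp (-2*x^2)))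
            + ∫⁻ x : ℝ, ENNReal.ofReal ((deriv a x)^2 * Real.exp (-2*x^2)))
          + (1/3) * ((∫⁻ x : ℝ, ENNReal.ofReal ((b x)^2 * Real.exp (-2*x^2)))
            + ∫⁻ x : ℝ, ENNReal.ofReal ((deriv b x)^2 * Real.exp (-2*x^2))) :=
          add_le_add ka kb
      _ = (1/3) * (((∫⁻ x : ℝ, ENNReal.ofReal ((a x)^2 * Real.exp (-2*x^2)))
            + ∫⁻ x : ℝ, ENNReal.ofReal ((b x)^2 * Real.exp (-2*x^2)))
          + ((∫⁻ x : ℝ, ENNReal.ofReal ((deriv a x)^2 * Real.exp (-2*x^2)))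
            + ∫⁻ x : ℝ, ENNReal.ofReal ((deriv b x)^2 * Real.exp (-2*x^2)))) := by
          rw [← mul_add]
          congr 1
          exact add_add_add_comm _ _ _ _
end
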